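/- arXiv:2501.06539 — 2 statements merged into one kernel-verified Lean document; each statement's English description precedes it below -/
import Mathlib

section
/- Let A ∈ ℝ^{n×n} with ‖A‖_2 ≤ 1/2, let ε ∈ (0,1/4), and suppose a sequence of matrices S_0 = A, S_{i+1} satisfies ‖S_{i+1} − S_i²‖_2 ≤ ε/4 for all i ≥ 0 and ‖S_1 − A²‖_2 ≤ ε/4. Then for every N ≥ 1, ‖S_N − A^{2^N}‖_2 ≤ ε, and in particular ‖S_N‖_2 ≤ ε + 2^{−2^N} ≤ 1/2. -/
open scoped Matrix.Norms.L2Operator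

/-!
Write `B = A ^ 2 ^ N`, so that `A ^ 2 ^ (N + 1) = B ^ 2` and `‖B‖ ≤ 1/4` once `N ≥ 1`. From
`S² - B² = (S - B) S + B (S - B)` one gets `‖S² - B²‖ ≤ e (e + 2‖B‖) ≤ e (ε + 1/2)` for `e = ‖S - B‖ ≤ ε`,
so one more approximate squaring costs at most `ε/4 + (3/4) ε = ε` as long as `ε ≤ 1/4`:
near elements of norm `≤ 1/4` squaring is `3/4`-Lipschitz, so the errors do not accumulate.
-/

theorem pow_two_pow_le_quarter_of_le_half {c : ℝ} (hc₀ : 0 ≤ c) (hc : c ≤ 1 / 2) {N : ℕ}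
    (hN : 1 ≤ N) : c ^ 2 ^ N ≤ 1 / 4 :=
  calc c ^ 2 ^ N ≤ c ^ 2 :=
        pow_le_pow_of_le_one hc₀ (by linarith) (Nat.le_self_pow (by omega) 2)
    _ ≤ (1 / 2) ^ 2 := by gcongr
    _ = 1 / 4 := by norm_num

section NormedRing

variable {R : Type*} [NormedRing R]

theorem norm_pow_le_pow_of_norm_le {a : R} {c : ℝ} (ha : ‖a‖ ≤ c) {k : ℕ} (hk : 0 < k) :
    ‖a ^ k‖ ≤ c ^ k :=
  (norm_pow_le' a hk).trans (pow_le_pow_left₀ (norm_nonneg a) ha k)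

theorem norm_sq_sub_sq_le (x y : R) : ‖x ^ 2 - y ^ 2‖ ≤ ‖x - y‖ * (‖x - y‖ + 2 * ‖y‖) := by
  have hx : ‖x‖ ≤ ‖x - y‖ + ‖y‖ := norm_le_norm_sub_add x y
  calc ‖x ^ 2 - y ^ 2‖ = ‖(x - y) * x + y * (x - y)‖ := by noncomm_ring
    _ ≤ ‖x - y‖ * ‖x‖ + ‖y‖ * ‖x - y‖ :=
        (norm_add_le _ _).trans (add_le_add (norm_mul_le _ _) (norm_mul_le _ _))
    _ ≤ ‖x - y‖ * (‖x - y‖ + ‖y‖) + ‖y‖ * ‖x - y‖ := by gcongr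
    _ = ‖x - y‖ * (‖x - y‖ + 2 * ‖y‖) := by ring

theorem norm_sub_sq_le_of_approx_sq {s s' b : R} {ε : ℝ} (hε : ε ≤ 1 / 4) (hb : ‖b‖ ≤ 1 / 4)
    (hs : ‖s - b‖ ≤ ε) (hs' : ‖s' - s ^ 2‖ ≤ ε / 4) : ‖s' - b ^ 2‖ ≤ ε := by
  have hε₀ : 0 ≤ ε := (norm_nonneg _).trans hs
  calc ‖s' - b ^ 2‖ ≤ ‖s' - s ^ 2‖ + ‖s ^ 2 - b ^ 2‖ := norm_sub_le_norm_sub_add_norm_sub _ _ _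
    _ ≤ ε / 4 + ε * (ε + 2 * (1 / 4)) := by
        gcongr
        exact (norm_sq_sub_sq_le s b).trans (by gcongr)
    _ ≤ ε := by nlinarith

theorem norm_approx_sq_iterate_sub_pow_le {a : R} {S : ℕ → R} {ε : ℝ} (ha : ‖a‖ ≤ 1 / 2)
    (hε : ε ≤ 1 / 4) (hS1 : ‖S 1 - a ^ 2‖ ≤ ε / 4)
    (hstep : ∀ i, ‖S (i + 1) - S i ^ 2‖ ≤ ε / 4) {N : ℕ} (hN : 1 ≤ N) :
    ‖S N - a ^ 2 ^ N‖ ≤ ε := by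
  induction N, hN using Nat.le_induction with
  | base => simpa using hS1.trans (by linarith [(norm_nonneg _).trans hS1])
  | succ N hN ih =>
    have hB : ‖a ^ 2 ^ N‖ ≤ 1 / 4 :=
      (norm_pow_le_pow_of_norm_le ha (by positivity)).trans
        (pow_two_pow_le_quarter_of_le_half (by norm_num) le_rfl hN)
    rw [pow_succ, pow_mul]
    exact norm_sub_sq_le_of_approx_sq hε hB ih (hstep N)

end NormedRing

theorem approx_squaring_error_general (n : ℕ) (A : Matrix (Fin n) (Fin n) ℝ)
    (hA : ‖A‖ ≤ 1 / 2) (ε : ℝ) (hε4 : ε < 1 / 4)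
    (S : ℕ → Matrix (Fin n) (Fin n) ℝ)
    (hstep : ∀ i : ℕ, ‖S (i + 1) - (S i) ^ 2‖ ≤ ε / 4)
    (hS1 : ‖S 1 - A ^ 2‖ ≤ ε / 4) :
    ∀ N : ℕ, 1 ≤ N →
      ‖S N - A ^ (2 ^ N)‖ ≤ ε ∧
      ‖S N‖ ≤ ε + (2 : ℝ) ^ (-(2 ^ N : ℤ)) ∧
      ε + (2 : ℝ) ^ (-(2 ^ N : ℤ)) ≤ 1 / 2 := by
  intro N hN
  have herr := norm_approx_sq_iterate_sub_pow_le hA hε4.le hS1 hstep hN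
  have hzpow : (2 : ℝ) ^ (-(2 ^ N : ℤ)) = (1 / 2) ^ 2 ^ N := by
    rw [zpow_neg, one_div, inv_pow, ← zpow_natCast]
    push_cast
    rfl
  rw [hzpow]
  refine ⟨herr, ?_, ?_⟩
  · calc ‖S N‖ ≤ ‖S N - A ^ 2 ^ N‖ + ‖A ^ 2 ^ N‖ := norm_le_norm_sub_add _ _
      _ ≤ ε + (1 / 2) ^ 2 ^ N := add_le_add herr (norm_pow_le_pow_of_norm_le hA (by positivity))
  · linarith [pow_two_pow_le_quarter_of_le_half (c := 1 / 2) (by norm_num) le_rfl hN]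

/-- Quantitative induction for repeated approximate squaring: if `‖A‖₂ ≤ 1/2`,
`ε ∈ (0,1/4)`, `S 0 = A` and each step satisfies `‖S (i+1) − (S i)²‖₂ ≤ ε/4`,
then `‖S N − A^{2^N}‖₂ ≤ ε` and `‖S N‖₂ ≤ ε + 2^{−2^N} ≤ 1/2` for all `N ≥ 1`. -/
theorem approx_squaring_error (n : ℕ) (A : Matrix (Fin n) (Fin n) ℝ)
    (hA : ‖A‖ ≤ 1 / 2) (ε : ℝ) (hε : 0 < ε) (hε4 : ε < 1 / 4)
    (S : ℕ → Matrix (Fin n) (Fin n) ℝ) (hS0 : S 0 = A)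
    (hstep : ∀ i : ℕ, ‖S (i + 1) - (S i) ^ 2‖ ≤ ε / 4)
    (hS1 : ‖S 1 - A ^ 2‖ ≤ ε / 4) :
    ∀ N : ℕ, 1 ≤ N →
      ‖S N - A ^ (2 ^ N)‖ ≤ ε ∧
      ‖S N‖ ≤ ε + (2 : ℝ) ^ (-(2 ^ N : ℤ)) ∧
      ε + (2 : ℝ) ^ (-(2 ^ N : ℤ)) ≤ 1 / 2 :=
  approx_squaring_error_general n A hA ε hε4 S hstep hS1
end

section
/- Let A ∈ ℝ^{n×n} with ‖A‖_2 ≤ 1. Then for every natural number i ≥ 0, ‖∏_{k=0}^{i} ((A/2)^{2^k} + 2^{−2^k} I)‖_2 ≤ 2^{i+2−2^{i+1}} ≤ 1/2 (the last inequality holding for i ≥ 1). -/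
/-!
With `m = 2ᵏ`, both summands of the `k`-th factor have norm at most `2⁻ᵐ`, so the factor has norm
at most `2^(1-m)`. By submultiplicativity the product over `k ≤ i` has norm at most
`2^(∑ₖ (1 - 2ᵏ)) = 2^((i+1) - (2^(i+1) - 1))`.
-/

open scoped Matrix.Norms.L2Operator

theorem CStarRing.norm_one_le {E : Type*} [NormedRing E] [StarRing E] [CStarRing E] :
    ‖(1 : E)‖ ≤ 1 := by
  rcases subsingleton_or_nontrivial E with _ | _
  · simp [Subsingleton.elim (1 : E) 0]
  · exact CStarRing.norm_one.le

section Factor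

variable {R : Type*} [SeminormedRing R] [NormedSpace ℝ R]

theorem norm_smul_pow_add_pow_smul_one_le {a : R} (ha : ‖a‖ ≤ 1) (h1 : ‖(1 : R)‖ ≤ 1)
    {c : ℝ} (hc : 0 ≤ c) {m : ℕ} (hm : m ≠ 0) :
    ‖(c • a) ^ m + c ^ m • (1 : R)‖ ≤ 2 * c ^ m := by
  have hpow : ‖(c • a) ^ m‖ ≤ c ^ m :=
    calc ‖(c • a) ^ m‖ ≤ ‖c • a‖ ^ m := norm_pow_le' _ (Nat.pos_of_ne_zero hm)
      _ ≤ (c * 1) ^ m := by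
        gcongr
        exact (norm_smul_le c a).trans (by rw [Real.norm_of_nonneg hc]; gcongr)
      _ = c ^ m := by rw [mul_one]
  have hone : ‖c ^ m • (1 : R)‖ ≤ c ^ m :=
    calc ‖c ^ m • (1 : R)‖ ≤ ‖c ^ m‖ * ‖(1 : R)‖ := norm_smul_le _ _
      _ ≤ c ^ m * 1 := by rw [Real.norm_of_nonneg (by positivity)]; gcongr
      _ = c ^ m := mul_one _
  calc _ ≤ ‖(c • a) ^ m‖ + ‖c ^ m • (1 : R)‖ := norm_add_le _ _
    _ ≤ 2 * c ^ m := by linarith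

theorem norm_half_smul_pow_add_two_zpow_smul_one_le {a : R} (ha : ‖a‖ ≤ 1)
    (h1 : ‖(1 : R)‖ ≤ 1) {m : ℕ} (hm : m ≠ 0) :
    ‖((1 / 2 : ℝ) • a) ^ m + (2 : ℝ) ^ (-(m : ℤ)) • (1 : R)‖ ≤ (2 : ℝ) ^ (1 - (m : ℤ)) := by
  have hhalf : (2 : ℝ) ^ (-(m : ℤ)) = (1 / 2) ^ m := by
    rw [zpow_neg, zpow_natCast, one_div, inv_pow]
  have htwice : (2 : ℝ) ^ (1 - (m : ℤ)) = 2 * (1 / 2) ^ m := by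
    rw [zpow_sub₀ two_ne_zero, zpow_one, zpow_natCast, one_div, inv_pow, div_eq_mul_inv]
  rw [hhalf, htwice]
  exact norm_smul_pow_add_pow_smul_one_le ha h1 (by norm_num) hm

end Factor

theorem List.norm_prod_map_range_succ_le {R : Type*} [SeminormedRing R] (f : ℕ → R) {g : ℕ → ℝ}
    (hfg : ∀ k, ‖f k‖ ≤ g k) (i : ℕ) :
    ‖((List.range (i + 1)).map f).prod‖ ≤ ∏ k ∈ Finset.range (i + 1), g k := by
  induction i with
  | zero => simpa using hfg 0
  | succ i ih =>
    rw [List.prod_range_succ, Finset.prod_range_succ]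
    have hg : 0 ≤ ∏ k ∈ Finset.range (i + 1), g k :=
      Finset.prod_nonneg fun k _ => (norm_nonneg _).trans (hfg k)
    exact (norm_mul_le _ _).trans (mul_le_mul ih (hfg _) (norm_nonneg _) hg)

theorem prod_range_two_zpow_one_sub_two_pow (i : ℕ) :
    ∏ k ∈ Finset.range (i + 1), (2 : ℝ) ^ (1 - (2 : ℤ) ^ k) = 2 ^ ((i : ℤ) + 2 - 2 ^ (i + 1)) := by
  induction i with
  | zero => norm_num
  | succ i ih =>
    rw [Finset.prod_range_succ, ih, ← zpow_add₀ two_ne_zero]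
    congr 1
    push_cast
    ring

theorem add_two_sub_two_pow_succ_le_neg_one {i : ℕ} (hi : 1 ≤ i) :
    (i : ℤ) + 2 - 2 ^ (i + 1) ≤ -1 := by
  have : i + 1 ≤ 2 ^ i := Nat.lt_two_pow_self
  have : i + 3 ≤ 2 ^ (i + 1) := by rw [pow_succ]; omega
  have : (i : ℤ) + 3 ≤ 2 ^ (i + 1) := by exact_mod_cast this
  omega

/-- If `‖A‖₂ ≤ 1`, then `‖∏_{k=0}^{i} ((A/2)^{2^k} + 2^{−2^k} I)‖₂ ≤ 2^{i+2−2^{i+1}}`,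
and this bound is at most `1/2` for `i ≥ 1`. -/
theorem neumann_factor_product_norm_bound (n : ℕ) (A : Matrix (Fin n) (Fin n) ℝ)
    (hA : ‖A‖ ≤ 1) (i : ℕ) :
    ‖((List.range (i + 1)).map (fun k =>
        ((1 / 2 : ℝ) • A) ^ (2 ^ k) + ((2 : ℝ) ^ (-(2 ^ k : ℤ))) • (1 : Matrix (Fin n) (Fin n) ℝ))).prod‖
      ≤ (2 : ℝ) ^ ((i : ℤ) + 2 - 2 ^ (i + 1)) ∧
    (1 ≤ i → (2 : ℝ) ^ ((i : ℤ) + 2 - 2 ^ (i + 1)) ≤ 1 / 2) := by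
  have hfactor (k : ℕ) :
      ‖((1 / 2 : ℝ) • A) ^ (2 ^ k) + ((2 : ℝ) ^ (-(2 ^ k : ℤ))) • (1 : Matrix (Fin n) (Fin n) ℝ)‖
        ≤ (2 : ℝ) ^ (1 - (2 : ℤ) ^ k) := by
    exact_mod_cast norm_half_smul_pow_add_two_zpow_smul_one_le hA CStarRing.norm_one_le
      (pow_ne_zero k two_ne_zero)
  refine ⟨?_, fun hi => ?_⟩
  · rw [← prod_range_two_zpow_one_sub_two_pow]
    exact List.norm_prod_map_range_succ_le _ hfactor i
  · calc (2 : ℝ) ^ ((i : ℤ) + 2 - 2 ^ (i + 1)) ≤ 2 ^ (-1 : ℤ) :=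
          zpow_le_zpow_right₀ one_le_two (add_two_sub_two_pow_succ_le_neg_one hi)
      _ = 1 / 2 := by norm_num
end
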